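/- arXiv:2508.05795 — 3 statements merged into one kernel-verified Lean document; each statement's English description precedes it below -/
import Mathlib

section
/- Let K be a field of characteristic zero, let y ∈ K, and let p be an odd prime. Then y is a p-th power in K if and only if y is a p-th power in K(μ_p), where μ_p is the set of p-th roots of unity. -/
/-!
A primitive `p`-th root of unity has minimal polynomial dividing the `p`-th cyclotomic polynomial,
so `[K(μ_p) : K] ≤ p - 1 < p`. If `y` is not a `p`-th power in `K`, then `X ^ p - y` is irreducible
over `K` (Capelli), so a `p`-th root of `y` has degree `p` over `K` and cannot lie in `K(μ_p)`.
-/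

open Polynomial Module

theorem IsCyclotomicExtension.finrank_le_totient (n : ℕ) [NeZero n] (K L : Type*) [Field K]
    [Field L] [Algebra K L] [IsCyclotomicExtension {n} K L] :
    Module.finrank K L ≤ n.totient := by
  have hζ := zeta_spec n K L
  have hdvd : minpoly K (zeta n K L) ∣ cyclotomic n K := by
    refine minpoly.dvd K _ ?_
    rw [aeval_def, eval₂_eq_eval_map, map_cyclotomic]
    exact hζ.isRoot_cyclotomic (NeZero.pos n)
  rw [(hζ.powerBasis K).finrank, IsPrimitiveRoot.powerBasis_dim, ← natDegree_cyclotomic n K]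
  exact natDegree_le_of_dvd hdvd (cyclotomic_ne_zero n K)

theorem exists_pow_eq_of_algebraMap_pow_eq_of_finrank_lt {K L : Type*} [Field K] [Field L]
    [Algebra K L] [FiniteDimensional K L] {p : ℕ} (hp : p.Prime) (hL : finrank K L < p)
    {y : K} {z : L} (hz : z ^ p = algebraMap K L y) : ∃ w : K, w ^ p = y := by
  by_contra! hy
  have hmin : minpoly K z = X ^ p - C y :=
    (minpoly.eq_of_irreducible_of_monic (X_pow_sub_C_irreducible_of_prime hp hy)
      (by simp [hz]) (monic_X_pow_sub_C y hp.ne_zero)).symm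
  have hdeg := minpoly.natDegree_le (A := K) z
  rw [hmin, natDegree_X_pow_sub_C] at hdeg
  omega

theorem stmt_5_general (K L : Type*) [Field K] [Field L] [Algebra K L]
    (p : ℕ) (hp : p.Prime)
    (hcyc : IsCyclotomicExtension {p} K L) (y : K) :
    (∃ z : K, z ^ p = y) ↔ ∃ z : L, z ^ p = algebraMap K L y := by
  refine ⟨fun ⟨z, hz⟩ => ⟨algebraMap K L z, by rw [← map_pow, hz]⟩, fun ⟨z, hz⟩ => ?_⟩
  have : NeZero p := ⟨hp.ne_zero⟩
  have := IsCyclotomicExtension.finiteDimensional {p} K L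
  have hL : finrank K L < p :=
    (IsCyclotomicExtension.finrank_le_totient p K L).trans_lt (Nat.totient_lt p hp.one_lt)
  exact exists_pow_eq_of_algebraMap_pow_eq_of_finrank_lt hp hL hz

theorem stmt_5 (K L : Type*) [Field K] [Field L] [CharZero K] [Algebra K L]
    (p : ℕ) (hp : p.Prime) (hodd : p ≠ 2)
    (hcyc : IsCyclotomicExtension {p} K L) (y : K) :
    (∃ z : K, z ^ p = y) ↔ ∃ z : L, z ^ p = algebraMap K L y :=
  stmt_5_general K L p hp hcyc y
end

section
/- Let p be a prime with p ≥ 3, let c ∈ ℚ with c ≠ 0, and let f(x) = x^p + c. Then 0 is not a periodic point of f over ℚ, i.e., f^n(0) ≠ 0 for all n ≥ 1. -/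
/-!
For odd `p` the map `x ↦ x ^ p + c` is strictly increasing, so the orbit of `0` is strictly
monotone: increasing if `c > 0`, decreasing if `c < 0`. A strictly monotone sequence never
returns to its starting value.
-/

open Function

theorem StrictMono.iterate_ne_self {α : Type*} [LinearOrder α] {f : α → α} (hf : StrictMono f)
    {x : α} (hx : f x ≠ x) {n : ℕ} (hn : n ≠ 0) : f^[n] x ≠ x := by
  rcases hx.lt_or_gt with hlt | hgt
  · exact (hf.strictAnti_iterate_of_map_lt hlt (Nat.pos_of_ne_zero hn)).ne
  · exact (hf.strictMono_iterate_of_lt_map hgt (Nat.pos_of_ne_zero hn)).ne'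

theorem stmt_12 (p : ℕ) (hp : p.Prime) (hp3 : 3 ≤ p) (c : ℚ) (hc : c ≠ 0) :
    ∀ n : ℕ, 1 ≤ n → (fun x : ℚ => x ^ p + c)^[n] 0 ≠ 0 := by
  intro n hn
  have hodd : Odd p := hp.odd_of_ne_two (by omega)
  have hmono : StrictMono fun x : ℚ => x ^ p + c := hodd.strictMono_pow.add_const c
  exact hmono.iterate_ne_self (by simpa [zero_pow hp.ne_zero] using hc) (by omega)
end

section
/- Let K be a number field, μ_m the m-th roots of unity in an algebraic closure, a a divisor of m, and suppose Gal(K(μ_a)/K) ≅ (ℤ/aℤ)^* (i.e., the Galois group acts transitively on primitive a-th roots of unity). Let y ∈ K, r ≥ 1, and X, z ∈ K(μ_a) with X ∈ K such that X^r - ζ·y = z^p for some primitive a-th root of unity ζ and prime p. Then ∏_{σ ∈ Gal(K(μ_a)/K)} (X^r - σ(ζ)·y) = u^p for some u ∈ K, and consequently X^{ra} - y^a = G·u^p where G = ∏_{ω ∈ μ_a, ord(ω) < a} (X^r - ω·y) ∈ K. -/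
/-!
The `a`-th roots of unity split into the primitive ones and the rest, so
`X ^ (r * a) - y ^ a = ∏ ω ∈ μ_a, (X ^ r - ω * y)` factors as `G` times the product over the
primitive roots. Since the Galois group acts simply transitively on the primitive `a`-th roots,
the latter is `∏ σ, σ (X ^ r - ζ * y) = ∏ σ, σ z ^ p`, the `p`-th power of the norm of `z`.
The non-primitive roots form a Galois-stable set, so `G` is Galois-invariant and lies in `K`.
-/

open Polynomial

theorem filter_not_orderOf_lt_nthRootsFinset {R : Type*} [CommRing R] [IsDomain R] {a : ℕ}
    (ha : 0 < a) :
    (nthRootsFinset a (1 : R)).filter (fun ω => ¬ orderOf ω < a) = primitiveRoots a R := by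
  ext ω
  rw [Finset.mem_filter, mem_nthRootsFinset ha, mem_primitiveRoots ha,
    IsPrimitiveRoot.iff_orderOf]
  constructor
  · rintro ⟨hω, hlt⟩
    exact le_antisymm (orderOf_le_of_pow_eq_one ha hω) (not_lt.mp hlt)
  · rintro hord
    exact ⟨hord ▸ pow_orderOf_eq_one ω, hord.not_lt⟩

theorem MulEquiv.apply_mem_nthRootsFinset_filter_orderOf_lt_iff {R : Type*} [CommRing R]
    [IsDomain R] (e : R ≃* R) {a : ℕ} (ha : 0 < a) (ω : R) :
    e ω ∈ (nthRootsFinset a (1 : R)).filter (fun ω => orderOf ω < a) ↔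
      ω ∈ (nthRootsFinset a (1 : R)).filter (fun ω => orderOf ω < a) := by
  simp only [Finset.mem_filter, mem_nthRootsFinset ha, ← map_pow, map_eq_one_iff e e.injective,
    e.orderOf_eq]

section Galois

variable {K L : Type*} [Field K] [Field L] [Algebra K L]

theorem IsCyclotomicExtension.algEquiv_apply_injective {a : ℕ} [NeZero a]
    [IsCyclotomicExtension {a} K L] {ζ : L} (hζ : IsPrimitiveRoot ζ a) :
    Function.Injective fun σ : Gal(L/K) => σ ζ := by
  intro σ τ h
  apply AlgEquiv.coe_toAlgHom_injective
  exact AlgHom.ext_of_adjoin_eq_top (IsCyclotomicExtension.adjoin_primitive_root_eq_top hζ)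
    (by simpa using h)

variable [FiniteDimensional K L]

theorem prod_primitiveRoots_eq_prod_algEquiv {M : Type*} [CommMonoid M] {a : ℕ} (ha : 0 < a)
    [IsCyclotomicExtension {a} K L] {ζ : L} (hζ : IsPrimitiveRoot ζ a)
    (htrans : ∀ ζ' : L, IsPrimitiveRoot ζ' a → ∃ σ : Gal(L/K), σ ζ = ζ') (f : L → M) :
    ∏ ω ∈ primitiveRoots a L, f ω = ∏ σ : Gal(L/K), f (σ ζ) := by
  have : NeZero a := ⟨ha.ne'⟩
  symm
  refine Finset.prod_nbij (fun σ => σ ζ) (fun σ _ => ?_)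
    (fun σ _ τ _ h => IsCyclotomicExtension.algEquiv_apply_injective (K := K) hζ h)
    (fun ω hω => ?_) (fun _ _ => rfl)
  · exact (mem_primitiveRoots ha).2 (hζ.map_of_injective σ.injective)
  · obtain ⟨σ, hσ⟩ := htrans ω ((mem_primitiveRoots ha).1 hω)
    exact ⟨σ, Finset.mem_univ σ, hσ⟩

variable [IsGalois K L]

theorem prod_sub_mul_mem_range_algebraMap (S : Finset L)
    (hS : ∀ (σ : Gal(L/K)) (ω : L), σ ω ∈ S ↔ ω ∈ S) (x c : K) :
    ∏ ω ∈ S, (algebraMap K L x - ω * algebraMap K L c) ∈ Set.range (algebraMap K L) := by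
  rw [IsGalois.mem_range_algebraMap_iff_fixed]
  intro σ
  rw [map_prod]
  exact Finset.prod_equiv σ.toEquiv (fun ω => (hS σ ω).symm) (fun ω _ => by simp)

end Galois

open Polynomial in
theorem stmt_13_general (K L : Type*) [Field K] [Field L] [Algebra K L]
    [FiniteDimensional K L] [IsGalois K L]
    (a : ℕ) (ha : 0 < a)
    (hcyc : IsCyclotomicExtension {a} K L)
    (htrans : ∀ ζ ζ' : L, IsPrimitiveRoot ζ a → IsPrimitiveRoot ζ' a →
      ∃ σ : L ≃ₐ[K] L, σ ζ = ζ')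
    (y X : K) (r : ℕ) (p : ℕ)
    (ζ : L) (hζ : IsPrimitiveRoot ζ a) (z : L)
    (hz : (algebraMap K L X) ^ r - ζ * algebraMap K L y = z ^ p) :
    ∃ u G : K,
      (∏ σ : L ≃ₐ[K] L, ((algebraMap K L X) ^ r - σ ζ * algebraMap K L y))
        = algebraMap K L u ^ p ∧
      algebraMap K L G =
        ∏ ω ∈ (Polynomial.nthRootsFinset a (1 : L)).filter (fun ω => orderOf ω < a),
          ((algebraMap K L X) ^ r - ω * algebraMap K L y) ∧
      X ^ (r * a) - y ^ a = G * u ^ p := by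
  obtain ⟨G, hG⟩ := prod_sub_mul_mem_range_algebraMap
    ((nthRootsFinset a (1 : L)).filter (fun ω => orderOf ω < a))
    (fun σ => (σ : L ≃* L).apply_mem_nthRootsFinset_filter_orderOf_lt_iff ha) (X ^ r) y
  rw [map_pow] at hG
  have hnorm : ∏ σ : L ≃ₐ[K] L, ((algebraMap K L X) ^ r - σ ζ * algebraMap K L y)
      = algebraMap K L (Algebra.norm K z) ^ p := by
    rw [Algebra.norm_eq_prod_automorphisms, ← Finset.prod_pow]
    refine Finset.prod_congr rfl fun σ _ => ?_
    simpa using congrArg σ hz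
  refine ⟨Algebra.norm K z, G, hnorm, hG, (algebraMap K L).injective ?_⟩
  rw [map_sub, map_mul, map_pow, map_pow, map_pow, pow_mul, hG,
    hζ.pow_sub_pow_eq_prod_sub_mul _ _ ha,
    ← Finset.prod_filter_mul_prod_filter_not _ (fun ω => orderOf ω < a),
    filter_not_orderOf_lt_nthRootsFinset ha,
    prod_primitiveRoots_eq_prod_algEquiv ha hζ (htrans ζ · hζ), hnorm]

open Polynomial in
theorem stmt_13 (K L : Type*) [Field K] [NumberField K] [Field L] [Algebra K L]
    [FiniteDimensional K L] [IsGalois K L]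
    (m a : ℕ) (ha : 0 < a) (ham : a ∣ m)
    (hcyc : IsCyclotomicExtension {a} K L)
    (htrans : ∀ ζ ζ' : L, IsPrimitiveRoot ζ a → IsPrimitiveRoot ζ' a →
      ∃ σ : L ≃ₐ[K] L, σ ζ = ζ')
    (y X : K) (r : ℕ) (hr : 1 ≤ r) (p : ℕ) (hp : p.Prime)
    (ζ : L) (hζ : IsPrimitiveRoot ζ a) (z : L)
    (hz : (algebraMap K L X) ^ r - ζ * algebraMap K L y = z ^ p) :
    ∃ u G : K,
      (∏ σ : L ≃ₐ[K] L, ((algebraMap K L X) ^ r - σ ζ * algebraMap K L y))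
        = algebraMap K L u ^ p ∧
      algebraMap K L G =
        ∏ ω ∈ (Polynomial.nthRootsFinset a (1 : L)).filter (fun ω => orderOf ω < a),
          ((algebraMap K L X) ^ r - ω * algebraMap K L y) ∧
      X ^ (r * a) - y ^ a = G * u ^ p :=
  stmt_13_general K L a ha hcyc htrans y X r p ζ hζ z hz
end
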